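/- arXiv:2408.17053 — 3 statements merged into one kernel-verified Lean document; each statement's English description precedes it below -/
import Mathlib

section
/- Let (Ω, 𝓕, μ) be a standard Borel probability space, X : Ω → 𝒳 measurable, T : Ω → {0, 1} ⊆ ℝ measurable (binary), and Y₁, Y₀ : Ω → ℝ square-integrable. Define the observed outcome Y = T·Y₁ + (1 − T)·Y₀. Assume unconfoundedness: (Y₁, Y₀) is conditionally independent of T given σ(X). Then μ[Y·T | σ(X)] = μ[T | σ(X)] · μ[Y₁ | σ(X)] μ-almost everywhere. -/
open MeasureTheory ProbabilityTheory

/-! Since `T` is the indicator of `E = {T = 1}` and `Y * T = Y₁ * T`, it suffices to show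
`μ[Y₁ * 1_E | m] = μ[Y₁ | m] * μ⟦E | m⟧` for `m = σ(X)`, after replacing `Y₁` by a measurable
version. Conditional independence gives `μ⟦A ∩ E | m⟧ = μ⟦A | m⟧ * μ⟦E | m⟧` for `A ∈ σ(Y₁)`;
integrating over `s ∈ m` shows that `1_{s ∩ E}` and `1_s * μ⟦E | m⟧` have the same conditional
expectation given `σ(Y₁)`. Pairing both with the `σ(Y₁)`-measurable `Y₁` yields
`∫_s Y₁ * 1_E = ∫_s Y₁ * μ⟦E | m⟧` for all `s ∈ m`, and `μ⟦E | m⟧` pulls out of `μ[· | m]`. -/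

namespace ProbabilityTheory

variable {Ω : Type*} {m m₂ mΩ : MeasurableSpace Ω} {μ : Measure Ω}

theorem CondIndepFun.congr [StandardBorelSpace Ω] [IsFiniteMeasure μ] {hm : m ≤ mΩ}
    {β γ : Type*} [MeasurableSpace β] [MeasurableSpace γ] {f f' : Ω → β} {g g' : Ω → γ}
    (hfg : CondIndepFun m hm f g μ) (hf : f =ᵐ[μ] f') (hg : g =ᵐ[μ] g') :
    CondIndepFun m hm f' g' μ := by
  rw [← condExpKernel_comp_trim (μ := μ) hm] at hf hg
  exact Kernel.IndepFun.congr' hfg (Measure.ae_ae_of_ae_comp hf) (Measure.ae_ae_of_ae_comp hg)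

lemma ae_norm_condExp_indicator_le_one (E : Set Ω) : ∀ᵐ ω ∂μ, ‖(μ⟦E | m⟧) ω‖ ≤ 1 :=
  ae_bdd_norm_condExp_of_ae_bdd_norm <| .of_forall fun ω => by
    by_cases hω : ω ∈ E <;> simp [hω]

lemma integral_mul_eq_of_condExp_eq (hm₂ : m₂ ≤ mΩ) [SigmaFinite (μ.trim hm₂)]
    {Y h h' : Ω → ℝ} (hY : StronglyMeasurable[m₂] Y) (hYh : Integrable (Y * h) μ)
    (hYh' : Integrable (Y * h') μ) (hh : Integrable h μ) (hh' : Integrable h' μ)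
    (hhh' : μ[h | m₂] =ᵐ[μ] μ[h' | m₂]) :
    ∫ ω, (Y * h) ω ∂μ = ∫ ω, (Y * h') ω ∂μ := by
  have hpull : μ[Y * h | m₂] =ᵐ[μ] μ[Y * h' | m₂] := calc
    μ[Y * h | m₂] =ᵐ[μ] Y * μ[h | m₂] := condExp_mul_of_stronglyMeasurable_left hY hYh hh
    _ =ᵐ[μ] Y * μ[h' | m₂] := hhh'.mul_left
    _ =ᵐ[μ] μ[Y * h' | m₂] := (condExp_mul_of_stronglyMeasurable_left hY hYh' hh').symm
  rw [← integral_condExp hm₂, integral_congr_ae hpull, integral_condExp hm₂]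

variable [IsFiniteMeasure μ] {E : Set Ω}

lemma measureReal_inter_inter_eq_setIntegral_condExp (hm : m ≤ mΩ) {A s : Set Ω}
    (hE : MeasurableSet E) (hA : MeasurableSet A) (hs : MeasurableSet[m] s)
    (hAE : μ⟦A ∩ E | m⟧ =ᵐ[μ] μ⟦A | m⟧ * μ⟦E | m⟧) :
    μ.real (s ∩ (A ∩ E)) = ∫ ω in s ∩ A, (μ⟦E | m⟧) ω ∂μ := by
  have hA_int : Integrable (A.indicator fun _ => (1 : ℝ)) μ := (integrable_const 1).indicator hA
  have hAf_int : Integrable ((A.indicator fun _ => (1 : ℝ)) * μ⟦E | m⟧) μ :=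
    hA_int.mul_bdd integrable_condExp.aestronglyMeasurable (ae_norm_condExp_indicator_le_one E)
  calc μ.real (s ∩ (A ∩ E))
      = ∫ ω in s, (A ∩ E).indicator (fun _ => (1 : ℝ)) ω ∂μ := by
        rw [integral_indicator_const _ (hA.inter hE), measureReal_restrict_apply (hA.inter hE),
          smul_eq_mul, mul_one, Set.inter_comm]
    _ = ∫ ω in s, (μ⟦A | m⟧ * μ⟦E | m⟧) ω ∂μ := by
        rw [← setIntegral_condExp hm ((integrable_const 1).indicator (hA.inter hE)) hs]
        exact integral_congr_ae (ae_restrict_of_ae hAE)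
    _ = ∫ ω in s, ((A.indicator fun _ => (1 : ℝ)) * μ⟦E | m⟧) ω ∂μ := by
        rw [← setIntegral_condExp hm hAf_int hs]
        exact integral_congr_ae (ae_restrict_of_ae
          (condExp_mul_of_stronglyMeasurable_right stronglyMeasurable_condExp hAf_int hA_int).symm)
    _ = ∫ ω in s ∩ A, (μ⟦E | m⟧) ω ∂μ := by
        rw [← setIntegral_indicator hA]
        congr with ω
        by_cases hω : ω ∈ A <;> simp [hω]

lemma condExp_indicator_inter_eq_condExp_indicator_condExp (hm : m ≤ mΩ) (hm₂ : m₂ ≤ mΩ)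
    (hE : MeasurableSet E)
    (hfac : ∀ A, MeasurableSet[m₂] A → μ⟦A ∩ E | m⟧ =ᵐ[μ] μ⟦A | m⟧ * μ⟦E | m⟧)
    {s : Set Ω} (hs : MeasurableSet[m] s) :
    μ⟦s ∩ E | m₂⟧ =ᵐ[μ] μ[s.indicator (μ⟦E | m⟧) | m₂] := by
  have hsE : MeasurableSet (s ∩ E) := (hm s hs).inter hE
  refine ae_eq_condExp_of_forall_setIntegral_eq hm₂
    (integrable_condExp.indicator (hm s hs)) (fun _ _ _ => integrable_condExp.integrableOn)
    (fun A hA _ => ?_) stronglyMeasurable_condExp.aestronglyMeasurable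
  rw [setIntegral_condExp hm₂ ((integrable_const 1).indicator hsE) hA,
    integral_indicator_const _ hsE, measureReal_restrict_apply hsE, smul_eq_mul, mul_one,
    setIntegral_indicator (hm s hs), Set.inter_comm A s,
    ← measureReal_inter_inter_eq_setIntegral_condExp hm hE (hm₂ A hA) hs (hfac A hA)]
  congr 1
  ext
  simp only [Set.mem_inter_iff]
  tauto

lemma condExp_mul_indicator_eq_mul_of_condExp_inter_eq_mul (hm : m ≤ mΩ)
    (hm₂ : m₂ ≤ mΩ) (hE : MeasurableSet E)
    (hfac : ∀ A, MeasurableSet[m₂] A → μ⟦A ∩ E | m⟧ =ᵐ[μ] μ⟦A | m⟧ * μ⟦E | m⟧)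
    {Y : Ω → ℝ} (hY : StronglyMeasurable[m₂] Y) (hY_int : Integrable Y μ) :
    μ[Y * E.indicator (fun _ => 1) | m] =ᵐ[μ] μ[Y | m] * μ⟦E | m⟧ := by
  set f := μ⟦E | m⟧
  have hYf_int : Integrable (Y * f) μ :=
    hY_int.mul_bdd integrable_condExp.aestronglyMeasurable (ae_norm_condExp_indicator_le_one E)
  have hYE_int : Integrable (Y * E.indicator fun _ => (1 : ℝ)) μ :=
    hY_int.mul_bdd (c := 1) (aestronglyMeasurable_const.indicator hE) (.of_forall fun ω => by
      by_cases hω : ω ∈ E <;> simp [hω])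
  have hset : ∀ s, MeasurableSet[m] s →
      ∫ ω in s, (Y * E.indicator fun _ => (1 : ℝ)) ω ∂μ = ∫ ω in s, (Y * f) ω ∂μ := by
    intro s hs
    have hs' := hm s hs
    have hYE :
        s.indicator (Y * E.indicator fun _ => (1 : ℝ)) = Y * (s ∩ E).indicator fun _ => 1 := by
      ext ω
      by_cases hωs : ω ∈ s <;> by_cases hωE : ω ∈ E <;> simp [hωs, hωE]
    have hYf : s.indicator (Y * f) = Y * s.indicator f := by
      ext ω
      by_cases hωs : ω ∈ s <;> simp [hωs]
    rw [← integral_indicator hs', ← integral_indicator hs', hYE, hYf]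
    exact integral_mul_eq_of_condExp_eq hm₂ hY (hYE ▸ hYE_int.indicator hs')
      (hYf ▸ hYf_int.indicator hs') ((integrable_const 1).indicator (hs'.inter hE))
      (integrable_condExp.indicator hs')
      (condExp_indicator_inter_eq_condExp_indicator_condExp hm hm₂ hE hfac hs)
  calc μ[Y * E.indicator (fun _ => 1) | m] =ᵐ[μ] μ[Y * f | m] :=
        (ae_eq_condExp_of_forall_setIntegral_eq hm hYE_int
          (fun _ _ _ => integrable_condExp.integrableOn)
          (fun s hs _ => by rw [setIntegral_condExp hm hYf_int hs, hset s hs])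
          stronglyMeasurable_condExp.aestronglyMeasurable).symm
    _ =ᵐ[μ] μ[Y | m] * f :=
        condExp_mul_of_stronglyMeasurable_right stronglyMeasurable_condExp hYf_int hY_int

theorem CondIndepFun.condExp_mul_indicator_preimage [StandardBorelSpace Ω] {hm : m ≤ mΩ}
    {β : Type*} [MeasurableSpace β] {Y : Ω → ℝ} {T : Ω → β} (hYT : CondIndepFun m hm Y T μ)
    (hY : Measurable Y) (hT : Measurable T) (hY_int : Integrable Y μ) {t : Set β}
    (ht : MeasurableSet t) :
    μ[Y * (T ⁻¹' t).indicator (fun _ => 1) | m] =ᵐ[μ] μ[Y | m] * μ⟦T ⁻¹' t | m⟧ := by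
  refine condExp_mul_indicator_eq_mul_of_condExp_inter_eq_mul hm hY.comap_le (hT ht)
    ?_ (comap_measurable Y).stronglyMeasurable hY_int
  rintro _ ⟨s, hs, rfl⟩
  exact (condIndepFun_iff_condExp_inter_preimage_eq_mul hY hT).1 hYT s t hs ht

end ProbabilityTheory

theorem condexp_obs_mul_treatment_eq_general
    {Ω 𝒳 : Type*} {mΩ : MeasurableSpace Ω} [StandardBorelSpace Ω] [MeasurableSpace 𝒳]
    (μ : Measure Ω) [IsProbabilityMeasure μ]
    (X : Ω → 𝒳) (hX : Measurable X)
    (T : Ω → ℝ) (hT : Measurable T) (hT_bin : ∀ ω, T ω = 0 ∨ T ω = 1)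
    (Y₁ Y₀ : Ω → ℝ) (hY₁ : MemLp Y₁ 2 μ)
    (Y : Ω → ℝ) (hY : Y = fun ω => T ω * Y₁ ω + (1 - T ω) * Y₀ ω)
    (h_unconf : CondIndepFun (MeasurableSpace.comap X inferInstance) hX.comap_le
      (fun ω => (Y₁ ω, Y₀ ω)) T μ) :
    μ[fun ω => Y ω * T ω | MeasurableSpace.comap X inferInstance]
      =ᵐ[μ] fun ω => (μ[T | MeasurableSpace.comap X inferInstance]) ω
        * (μ[Y₁ | MeasurableSpace.comap X inferInstance]) ω := by
  have hY₁m : AEMeasurable Y₁ μ := hY₁.aestronglyMeasurable.aemeasurable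
  set Y₁' := hY₁m.mk Y₁
  have hT_ind : T = (T ⁻¹' {1}).indicator fun _ => 1 := by
    ext ω
    rcases hT_bin ω with h | h <;> simp [h]
  have hYT : (fun ω => Y ω * T ω) =ᵐ[μ] Y₁' * (T ⁻¹' {1}).indicator fun _ => 1 := by
    filter_upwards [hY₁m.ae_eq_mk] with ω hω
    rcases hT_bin ω with h | h <;> simp [hY, h, hω, Y₁']
  have hindep : CondIndepFun _ hX.comap_le Y₁' T μ :=
    (h_unconf.comp measurable_fst measurable_id).congr hY₁m.ae_eq_mk .rfl
  calc μ[fun ω => Y ω * T ω | _]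
      =ᵐ[μ] μ[Y₁' * (T ⁻¹' {1}).indicator fun _ => 1 | _] := condExp_congr_ae hYT
    _ =ᵐ[μ] μ[Y₁' | _] * μ⟦T ⁻¹' {1} | _⟧ :=
        hindep.condExp_mul_indicator_preimage hY₁m.measurable_mk hT
          ((hY₁.integrable one_le_two).congr hY₁m.ae_eq_mk) (measurableSet_singleton 1)
    _ =ᵐ[μ] μ[Y₁ | _] * μ[T | _] := by
        rw [← hT_ind]
        exact (condExp_congr_ae hY₁m.ae_eq_mk.symm).mul .rfl
    _ = _ := mul_comm _ _

/-- Under unconfoundedness, the treated-group regression function is identified from the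
observed outcome `Y = T·Y₁ + (1 - T)·Y₀`:
`μ[Y·T | σ(X)] = μ[T | σ(X)] · μ[Y₁ | σ(X)]` a.e. -/
theorem condexp_obs_mul_treatment_eq
    {Ω 𝒳 : Type*} {mΩ : MeasurableSpace Ω} [StandardBorelSpace Ω] [MeasurableSpace 𝒳]
    (μ : Measure Ω) [IsProbabilityMeasure μ]
    (X : Ω → 𝒳) (hX : Measurable X)
    (T : Ω → ℝ) (hT : Measurable T) (hT_bin : ∀ ω, T ω = 0 ∨ T ω = 1)
    (Y₁ Y₀ : Ω → ℝ) (hY₁ : MemLp Y₁ 2 μ) (hY₀ : MemLp Y₀ 2 μ)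
    (Y : Ω → ℝ) (hY : Y = fun ω => T ω * Y₁ ω + (1 - T ω) * Y₀ ω)
    (h_unconf : CondIndepFun (MeasurableSpace.comap X inferInstance) hX.comap_le
      (fun ω => (Y₁ ω, Y₀ ω)) T μ) :
    μ[fun ω => Y ω * T ω | MeasurableSpace.comap X inferInstance]
      =ᵐ[μ] fun ω => (μ[T | MeasurableSpace.comap X inferInstance]) ω
        * (μ[Y₁ | MeasurableSpace.comap X inferInstance]) ω :=
  condexp_obs_mul_treatment_eq_general (mΩ := mΩ) μ X hX T hT hT_bin Y₁ Y₀ hY₁ Y hY h_unconf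
end

section
/- Let (Ω, 𝓕, μ) be a standard Borel probability space, X : Ω → 𝒳 measurable, T : Ω → {0, 1} ⊆ ℝ measurable (binary), and Y₁, Y₀ : Ω → ℝ square-integrable. Define the observed outcome Y = T·Y₁ + (1 − T)·Y₀ and the propensity function e = μ[T | σ(X)]. Assume unconfoundedness ((Y₁, Y₀) conditionally independent of T given σ(X)) and overlap (0 < e < 1 μ-almost everywhere). Then μ-almost everywhere, the CATE is identified from observed data: μ[Y₁ − Y₀ | σ(X)] = μ[Y·T | σ(X)] / e − μ[Y·(1 − T) | σ(X)] / (1 − e). -/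
/-!
Conditionally on `σ(X)`, i.e. under the conditional expectation kernel, unconfoundedness makes
`Y₁` and `T` (and `Y₀` and `1 - T`) independent for almost every `ω`, so
`μ[Y₁ * T | σ(X)] = μ[Y₁ | σ(X)] * e` and `μ[Y₀ * (1 - T) | σ(X)] = μ[Y₀ | σ(X)] * (1 - e)`.
Since `T` is binary, `Y * T = Y₁ * T` and `Y * (1 - T) = Y₀ * (1 - T)`, and overlap allows
dividing by `e` and `1 - e`.
-/

open MeasureTheory ProbabilityTheory

namespace ProbabilityTheory

variable {Ω : Type*} {m' mΩ : MeasurableSpace Ω} [StandardBorelSpace Ω]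
  {μ : Measure Ω} [IsFiniteMeasure μ]

lemma ae_ae_eq_condExpKernel_of_ae_eq {γ : Type*} (hm' : m' ≤ mΩ) {f f' : Ω → γ}
    (h : f =ᵐ[μ] f') : ∀ᵐ ω ∂μ.trim hm', f =ᵐ[condExpKernel μ m' ω] f' := by
  rw [← condExpKernel_comp_trim (μ := μ) hm'] at h
  exact Measure.ae_ae_of_ae_comp h

/- `CondIndepFun` gives each product identity outside a null set depending on the pair of sets;
countable generation lets a single null set serve all pairs. -/
lemma CondIndepFun.ae_indepFun_condExpKernel {β β' : Type*} [MeasurableSpace β]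
    [MeasurableSpace β'] [MeasurableSpace.CountableOrCountablyGenerated Ω (β × β')] {hm' : m' ≤ mΩ}
    {f : Ω → β} {g : Ω → β'} (hf : AEMeasurable f μ) (hg : AEMeasurable g μ)
    (h : CondIndepFun m' hm' f g μ) :
    ∀ᵐ ω ∂μ, IndepFun f g (condExpKernel μ m' ω) := by
  have hf_mk := ae_ae_eq_condExpKernel_of_ae_eq hm' hf.ae_eq_mk
  have hg_mk := ae_ae_eq_condExpKernel_of_ae_eq hm' hg.ae_eq_mk
  have h_mk : CondIndepFun m' hm' (hf.mk f) (hg.mk g) μ := Kernel.IndepFun.congr' h hf_mk hg_mk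
  rw [condIndepFun_iff_map_prod_eq_prod_map_map hf.measurable_mk hg.measurable_mk] at h_mk
  filter_upwards [ae_of_ae_trim hm' h_mk, ae_of_ae_trim hm' hf_mk, ae_of_ae_trim hm' hg_mk]
    with ω h_prod hfω hgω
  refine IndepFun.congr ?_ hfω.symm hgω.symm
  rw [indepFun_iff_map_prod_eq_prod_map_map hf.measurable_mk.aemeasurable
    hg.measurable_mk.aemeasurable]
  simpa [Kernel.map_apply _ (hf.measurable_mk.prodMk hg.measurable_mk), Kernel.prod_apply,
    Kernel.map_apply _ hf.measurable_mk, Kernel.map_apply _ hg.measurable_mk] using h_prod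

lemma CondIndepFun.condExp_mul {hm' : m' ≤ mΩ} {f g : Ω → ℝ} (h : CondIndepFun m' hm' f g μ)
    (hf : Integrable f μ) (hg : Integrable g μ) (hfg : Integrable (f * g) μ) :
    μ[f * g | m'] =ᵐ[μ] μ[f | m'] * μ[g | m'] := by
  filter_upwards [condExp_ae_eq_integral_condExpKernel hm' hfg,
    condExp_ae_eq_integral_condExpKernel hm' hf, condExp_ae_eq_integral_condExpKernel hm' hg,
    h.ae_indepFun_condExpKernel hf.aemeasurable hg.aemeasurable,
    hf.condExpKernel_ae (m := m'), hg.condExpKernel_ae (m := m')]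
    with ω hfgω hfω hgω h_indep hfκ hgκ
  rw [hfgω, Pi.mul_apply, hfω, hgω]
  exact h_indep.integral_mul_eq_mul_integral hfκ.1 hgκ.1

end ProbabilityTheory

theorem condExp_sub_ae_eq_inverse_propensity_weighting {Ω : Type*} {m' mΩ : MeasurableSpace Ω}
    [StandardBorelSpace Ω] {μ : Measure Ω} [IsFiniteMeasure μ] {hm' : m' ≤ mΩ}
    {T : Ω → ℝ} (hT : Measurable T) (hT_bin : ∀ ω, T ω = 0 ∨ T ω = 1)
    {Y₁ Y₀ : Ω → ℝ} (hY₁ : Integrable Y₁ μ) (hY₀ : Integrable Y₀ μ)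
    (h_unconf : CondIndepFun m' hm' (fun ω => (Y₁ ω, Y₀ ω)) T μ)
    (h_overlap : ∀ᵐ ω ∂μ, 0 < μ[T | m'] ω ∧ μ[T | m'] ω < 1) :
    μ[Y₁ - Y₀ | m'] =ᵐ[μ] fun ω =>
      μ[fun ω' => (T ω' * Y₁ ω' + (1 - T ω') * Y₀ ω') * T ω' | m'] ω / μ[T | m'] ω
      - μ[fun ω' => (T ω' * Y₁ ω' + (1 - T ω') * Y₀ ω') * (1 - T ω') | m'] ω
        / (1 - μ[T | m'] ω) := by
  set C : Ω → ℝ := fun ω => 1 - T ω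
  have hC : Measurable C := measurable_const.sub hT
  have hT_bound : ∀ ω, ‖T ω‖ ≤ 1 ∧ ‖C ω‖ ≤ 1 := fun ω => by
    rcases hT_bin ω with h | h <;> simp [C, h]
  have hTi : Integrable T μ := (integrable_const 1).mono' hT.aestronglyMeasurable
    (.of_forall fun ω => (hT_bound ω).1)
  have hCi : Integrable C μ := (integrable_const 1).sub hTi
  have h_treated : μ[Y₁ * T | m'] =ᵐ[μ] μ[Y₁ | m'] * μ[T | m'] :=
    (h_unconf.comp measurable_fst measurable_id).condExp_mul hY₁ hTi
      (hY₁.mul_bdd hT.aestronglyMeasurable (.of_forall fun ω => (hT_bound ω).1))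
  have h_control : μ[Y₀ * C | m'] =ᵐ[μ] μ[Y₀ | m'] * μ[C | m'] :=
    (h_unconf.comp measurable_snd (measurable_const.sub measurable_id)).condExp_mul hY₀ hCi
      (hY₀.mul_bdd hC.aestronglyMeasurable (.of_forall fun ω => (hT_bound ω).2))
  have h_untreated : μ[C | m'] =ᵐ[μ] fun ω => 1 - μ[T | m'] ω := by
    filter_upwards [condExp_sub (integrable_const 1) hTi m'] with ω hω
    rw [condExp_const hm'] at hω
    exact hω
  have hYT : (fun ω => (T ω * Y₁ ω + (1 - T ω) * Y₀ ω) * T ω) = Y₁ * T := by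
    ext ω; rcases hT_bin ω with h | h <;> simp [h]
  have hYC : (fun ω => (T ω * Y₁ ω + (1 - T ω) * Y₀ ω) * C ω) = Y₀ * C := by
    ext ω; rcases hT_bin ω with h | h <;> simp [C, h]
  rw [hYT, hYC]
  filter_upwards [condExp_sub hY₁ hY₀ m', h_treated, h_control, h_untreated, h_overlap]
    with ω h_cate h_treated h_control h_untreated ⟨he_pos, he_lt_one⟩
  simp only [h_cate, h_treated, h_control, h_untreated, Pi.mul_apply, Pi.sub_apply]
  rw [mul_div_cancel_right₀ _ he_pos.ne', mul_div_cancel_right₀ _ (sub_pos.2 he_lt_one).ne']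

/-- Identifiability of the CATE from observational data under strong ignorability
(unconfoundedness and overlap):
`μ[Y₁ - Y₀ | σ(X)] = μ[Y·T | σ(X)] / e - μ[Y·(1 - T) | σ(X)] / (1 - e)` a.e.,
where `e = μ[T | σ(X)]` is the propensity score and `Y = T·Y₁ + (1 - T)·Y₀`. -/
theorem cate_identification
    {Ω 𝒳 : Type*} {mΩ : MeasurableSpace Ω} [StandardBorelSpace Ω] [MeasurableSpace 𝒳]
    (μ : Measure Ω) [IsProbabilityMeasure μ]
    (X : Ω → 𝒳) (hX : Measurable X)
    (T : Ω → ℝ) (hT : Measurable T) (hT_bin : ∀ ω, T ω = 0 ∨ T ω = 1)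
    (Y₁ Y₀ : Ω → ℝ) (hY₁ : MemLp Y₁ 2 μ) (hY₀ : MemLp Y₀ 2 μ)
    (Y : Ω → ℝ) (hY : Y = fun ω => T ω * Y₁ ω + (1 - T ω) * Y₀ ω)
    (e : Ω → ℝ) (he : e = μ[T | MeasurableSpace.comap X inferInstance])
    (h_unconf : CondIndepFun (MeasurableSpace.comap X inferInstance) hX.comap_le
      (fun ω => (Y₁ ω, Y₀ ω)) T μ)
    (h_overlap : ∀ᵐ ω ∂μ, 0 < e ω ∧ e ω < 1) :
    μ[fun ω => Y₁ ω - Y₀ ω | MeasurableSpace.comap X inferInstance]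
      =ᵐ[μ] fun ω =>
        (μ[fun ω' => Y ω' * T ω' | MeasurableSpace.comap X inferInstance]) ω / e ω
        - (μ[fun ω' => Y ω' * (1 - T ω') | MeasurableSpace.comap X inferInstance]) ω
          / (1 - e ω) := by
  subst hY he
  exact condExp_sub_ae_eq_inverse_propensity_weighting hT hT_bin (hY₁.integrable one_le_two)
    (hY₀.integrable one_le_two) h_unconf h_overlap
end

section
/- Let (Ω, 𝓕, μ) be a standard Borel probability space, W : Ω → ℛ measurable with ℛ a standard Borel space, V : Ω → ℝ² measurable, and T : Ω → {0, 1} ⊆ ℝ measurable with 0 < μ{T = 1} < 1. Let μ₁ = μ[· | {T = 1}] and μ₀ = μ[· | {T = 0}], and assume the overlap condition 0 < μ[T | σ(W)] < 1 μ-a.e. If the conditional distribution (regular conditional probability) of V given W under μ₁ agrees with the conditional distribution of V given W under μ₀, almost everywhere with respect to the pushforward measure Map W μ, then V is conditionally independent of T given σ(W). -/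
/-!
Write `A = {T = 1}` and `κ_A` for the conditional law of `V` given `W` under `μ[|A]`. Since
`μ.restrict A = μ A • μ[|A]`, disintegrating along `W` gives
`P(V ∈ s, A | W) = κ_A(W)(s) · P(A | W)`, and likewise for `Aᶜ`. When `κ_A = κ_Aᶜ`, adding the
two identities yields `P(V ∈ s | W) = κ_A(W)(s)`, hence
`P(V ∈ s, A | W) = P(V ∈ s | W) · P(A | W)`; as `T` is the indicator of `A`, this is the
conditional independence of `V` and `T`.
-/

open MeasureTheory ProbabilityTheory Set

section

variable {Ω : Type*} {m mΩ : MeasurableSpace Ω} {μ : Measure Ω} [IsFiniteMeasure μ]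
  {A B : Set Ω}

lemma condExp_indicator_ae_eq_inter_add_inter_compl (hA : MeasurableSet A) (hB : MeasurableSet B) :
    μ⟦B | m⟧ =ᵐ[μ] μ⟦B ∩ A | m⟧ + μ⟦B ∩ Aᶜ | m⟧ := by
  have h_split : B.indicator (fun _ ↦ (1 : ℝ)) =
      (B ∩ A).indicator (fun _ ↦ 1) + (B ∩ Aᶜ).indicator (fun _ ↦ 1) := by
    rw [inter_comm, ← indicator_indicator, inter_comm, ← indicator_indicator,
      indicator_self_add_compl]
  rw [h_split]
  exact condExp_add ((integrable_const (1 : ℝ)).indicator (hB.inter hA))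
    ((integrable_const (1 : ℝ)).indicator (hB.inter hA.compl)) m

lemma condExp_indicator_add_compl_ae_eq_one (hm : m ≤ mΩ) (hA : MeasurableSet A) :
    μ⟦A | m⟧ + μ⟦Aᶜ | m⟧ =ᵐ[μ] 1 := by
  have h := condExp_indicator_ae_eq_inter_add_inter_compl (μ := μ) (m := m) hA MeasurableSet.univ
  rw [univ_inter, univ_inter, indicator_univ, condExp_const hm] at h
  exact h.symm

end

section CondDistribCond

variable {Ω β γ : Type*} {mΩ : MeasurableSpace Ω} {mβ : MeasurableSpace β}
  {mγ : MeasurableSpace γ} {μ : Measure Ω} [IsFiniteMeasure μ] {A : Set Ω}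

lemma smul_cond_eq_restrict (hA : MeasurableSet A) : μ A • μ[|A] = μ.restrict A := by
  ext t ht
  rw [Measure.smul_apply, smul_eq_mul, mul_comm, cond_mul_eq_inter hA, Measure.restrict_apply ht,
    inter_comm]

variable [StandardBorelSpace β] [Nonempty β] {V : Ω → β} {W : Ω → γ} {s : Set β}

lemma setLIntegral_condDistrib_cond (hW : Measurable W) (hV : Measurable V) (hA : MeasurableSet A)
    (hs : MeasurableSet s) {C : Set Ω} (hC : MeasurableSet[mγ.comap W] C) :
    ∫⁻ ω in C, condDistrib V W μ[|A] (W ω) s ∂(μ.restrict A) = μ (A ∩ (C ∩ V ⁻¹' s)) := by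
  rw [← smul_cond_eq_restrict hA, Measure.restrict_smul, lintegral_smul_measure,
    setLIntegral_condDistrib_of_measurableSet hW hV.aemeasurable hs hC, smul_eq_mul, mul_comm,
    cond_mul_eq_inter hA]

lemma setIntegral_condDistrib_cond_mul_indicator (hW : Measurable W) (hV : Measurable V)
    (hA : MeasurableSet A) (hs : MeasurableSet s) {C : Set Ω} (hC : MeasurableSet[mγ.comap W] C) :
    ∫ ω in C, (condDistrib V W μ[|A] (W ω)).real s * A.indicator (fun _ ↦ 1) ω ∂μ =
      μ.real (V ⁻¹' s ∩ A ∩ C) := by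
  have h_indicator : (fun ω ↦ (condDistrib V W μ[|A] (W ω)).real s * A.indicator (fun _ ↦ 1) ω) =
      A.indicator fun ω ↦ (condDistrib V W μ[|A] (W ω)).real s := by
    ext ω; by_cases hω : ω ∈ A <;> simp [hω]
  rw [h_indicator, setIntegral_indicator hA, ← Measure.restrict_restrict (hW.comap_le C hC)]
  simp only [measureReal_def]
  rw [integral_toReal ((measurable_condDistrib hs).mono hW.comap_le le_rfl).aemeasurable
      (.of_forall fun _ ↦ measure_lt_top _ _), setLIntegral_condDistrib_cond hW hV hA hs hC]
  congr 1
  ac_rfl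

lemma condExp_preimage_inter_ae_eq_condDistrib_cond_mul (hW : Measurable W) (hV : Measurable V)
    (hA : MeasurableSet A) (hs : MeasurableSet s) :
    μ⟦V ⁻¹' s ∩ A | mγ.comap W⟧ =ᵐ[μ]
      fun ω ↦ (condDistrib V W μ[|A] (W ω)).real s * (μ⟦A | mγ.comap W⟧) ω := by
  have hm := hW.comap_le
  set f : Ω → ℝ := fun ω ↦ (condDistrib V W μ[|A] (W ω)).real s
  have hf : StronglyMeasurable[mγ.comap W] f :=
    (measurable_condDistrib hs).ennreal_toReal.stronglyMeasurable
  have hf_le : ∀ ω, ‖f ω‖ ≤ 1 := fun ω ↦ by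
    rw [Real.norm_eq_abs, abs_of_nonneg measureReal_nonneg]
    exact measureReal_le_one
  have hA_int : Integrable (A.indicator fun _ ↦ (1 : ℝ)) μ := (integrable_const 1).indicator hA
  have hfA_int : Integrable (f * A.indicator fun _ ↦ (1 : ℝ)) μ :=
    hA_int.bdd_mul (hf.mono hm).aestronglyMeasurable (.of_forall hf_le)
  have h_setIntegral : ∀ C, MeasurableSet[mγ.comap W] C →
      ∫ ω in C, μ[f * A.indicator fun _ ↦ (1 : ℝ) | mγ.comap W] ω ∂μ =
        ∫ ω in C, (V ⁻¹' s ∩ A).indicator (fun _ ↦ (1 : ℝ)) ω ∂μ := fun C hC ↦ by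
    rw [setIntegral_condExp hm hfA_int hC, integral_indicator_const _ ((hV hs).inter hA),
      measureReal_restrict_apply ((hV hs).inter hA), smul_eq_mul, mul_one]
    exact setIntegral_condDistrib_cond_mul_indicator hW hV hA hs hC
  calc μ⟦V ⁻¹' s ∩ A | mγ.comap W⟧
      =ᵐ[μ] μ[f * A.indicator fun _ ↦ (1 : ℝ) | mγ.comap W] :=
        (ae_eq_condExp_of_forall_setIntegral_eq hm
          ((integrable_const 1).indicator ((hV hs).inter hA))
          (fun _ _ _ ↦ integrable_condExp.integrableOn) (fun C hC _ ↦ h_setIntegral C hC)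
          stronglyMeasurable_condExp.aestronglyMeasurable).symm
    _ =ᵐ[μ] f * μ⟦A | mγ.comap W⟧ :=
        condExp_stronglyMeasurable_mul_of_bound hm hf hA_int 1 (.of_forall hf_le)

lemma condExp_preimage_inter_ae_eq_mul_of_condDistrib_cond_eq (hW : Measurable W)
    (hV : Measurable V) (hA : MeasurableSet A)
    (h_eq : condDistrib V W μ[|A] =ᵐ[μ.map W] condDistrib V W μ[|Aᶜ]) (hs : MeasurableSet s) :
    μ⟦V ⁻¹' s ∩ A | mγ.comap W⟧ =ᵐ[μ] μ⟦V ⁻¹' s | mγ.comap W⟧ * μ⟦A | mγ.comap W⟧ := by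
  set f : Ω → ℝ := fun ω ↦ (condDistrib V W μ[|A] (W ω)).real s
  have h_compl : (fun ω ↦ (condDistrib V W μ[|Aᶜ] (W ω)).real s) =ᵐ[μ] f :=
    (ae_of_ae_map hW.aemeasurable h_eq).mono fun ω h ↦ by simp only [f, h]
  have h_total : μ⟦V ⁻¹' s | mγ.comap W⟧ =ᵐ[μ] f := by
    filter_upwards [condExp_indicator_ae_eq_inter_add_inter_compl hA (hV hs),
      condExp_preimage_inter_ae_eq_condDistrib_cond_mul hW hV hA hs,
      condExp_preimage_inter_ae_eq_condDistrib_cond_mul hW hV hA.compl hs, h_compl,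
      condExp_indicator_add_compl_ae_eq_one hW.comap_le hA] with ω h_split h_A h_Ac h_f h_one
    rw [h_split, Pi.add_apply, h_A, h_Ac, h_f, ← mul_add, ← Pi.add_apply, h_one, Pi.one_apply,
      mul_one]
  filter_upwards [condExp_preimage_inter_ae_eq_condDistrib_cond_mul hW hV hA hs, h_total]
    with ω h_A h_f
  rw [h_A, Pi.mul_apply, h_f]

end CondDistribCond

lemma condIndepFun_indicator_of_condExp_preimage_inter_ae_eq_mul {Ω β M : Type*}
    {m' mΩ : MeasurableSpace Ω} [StandardBorelSpace Ω] {hm' : m' ≤ mΩ} {μ : Measure Ω}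
    [IsFiniteMeasure μ] {mβ : MeasurableSpace β} [Zero M] [MeasurableSpace M] {f : Ω → β}
    {A : Set Ω} (hf : Measurable f) (hA : MeasurableSet A) (c : M)
    (h : ∀ s, MeasurableSet s → μ⟦f ⁻¹' s ∩ A | m'⟧ =ᵐ[μ] μ⟦f ⁻¹' s | m'⟧ * μ⟦A | m'⟧) :
    CondIndepFun m' hm' f (A.indicator fun _ ↦ c) μ := by
  rw [condIndepFun_iff_condIndep]
  refine condIndep_of_condIndep_of_le_right ?_
    (MeasurableSpace.comap_indicator_const_le_generateFrom_singleton A c)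
  refine CondIndepSets.condIndep hf.comap_le (MeasurableSpace.generateFrom_singleton_le hA)
    (@MeasurableSpace.isPiSystem_measurableSet _ (mβ.comap f)) (IsPiSystem.singleton A)
    (@MeasurableSpace.generateFrom_measurableSet _ (mβ.comap f)).symm rfl ?_
  refine (condIndepSets_iff _ _ _ _ (fun _ ht ↦ hf.comap_le _ ht)
    (fun _ ht ↦ (mem_singleton_iff.1 ht).symm ▸ hA) μ).2 ?_
  rintro _ _ ⟨s, hs, rfl⟩ rfl
  exact h s hs

theorem condIndepFun_of_condDistrib_treated_eq_control_general
    {Ω ℛ : Type*} {mΩ : MeasurableSpace Ω} [StandardBorelSpace Ω]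
    [MeasurableSpace ℛ]
    (μ : Measure Ω) [IsProbabilityMeasure μ]
    (W : Ω → ℛ) (hW : Measurable W)
    (V : Ω → ℝ × ℝ) (hV : Measurable V)
    (T : Ω → ℝ) (hT : Measurable T) (hT_bin : ∀ ω, T ω = 0 ∨ T ω = 1)
    (h_eq : ∀ᵐ r ∂(μ.map W),
      condDistrib V W (μ[|{ω | T ω = 1}]) r = condDistrib V W (μ[|{ω | T ω = 0}]) r) :
    CondIndepFun (MeasurableSpace.comap W inferInstance) hW.comap_le V T μ := by
  set A : Set Ω := {ω | T ω = 1}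
  have hA : MeasurableSet A := hT (measurableSet_singleton 1)
  have hT_zero : {ω | T ω = 0} = Aᶜ := by
    ext ω; rcases hT_bin ω with h | h <;> simp [A, h]
  have hT_indicator : T = A.indicator fun _ ↦ 1 := by
    ext ω; rcases hT_bin ω with h | h <;> simp [A, h]
  rw [hT_zero] at h_eq
  rw [hT_indicator]
  exact condIndepFun_indicator_of_condExp_preimage_inter_ae_eq_mul hV hA 1
    fun _ hs ↦ condExp_preimage_inter_ae_eq_mul_of_condDistrib_cond_eq hW hV hA h_eq hs

/-- Converse direction (core of the paper's Theorem 1): if (under overlap) the regular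
conditional distribution of the potential outcomes `V` given the representation `W` is the
same in the treated group (`μ₁ = μ[·|{T = 1}]`) and the control group (`μ₀ = μ[·|{T = 0}]`),
a.e. with respect to `μ.map W`, then `V` is conditionally independent of `T` given `σ(W)`,
i.e. the representation satisfies the unconfoundedness assumption. -/
theorem condIndepFun_of_condDistrib_treated_eq_control
    {Ω ℛ : Type*} {mΩ : MeasurableSpace Ω} [StandardBorelSpace Ω]
    [MeasurableSpace ℛ] [StandardBorelSpace ℛ]
    (μ : Measure Ω) [IsProbabilityMeasure μ]
    (W : Ω → ℛ) (hW : Measurable W)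
    (V : Ω → ℝ × ℝ) (hV : Measurable V)
    (T : Ω → ℝ) (hT : Measurable T) (hT_bin : ∀ ω, T ω = 0 ∨ T ω = 1)
    (hT1 : 0 < μ {ω | T ω = 1}) (hT1' : μ {ω | T ω = 1} < 1)
    (h_overlap : ∀ᵐ ω ∂μ,
      0 < (μ[T | MeasurableSpace.comap W inferInstance]) ω ∧
        (μ[T | MeasurableSpace.comap W inferInstance]) ω < 1)
    (h_eq : ∀ᵐ r ∂(μ.map W),
      condDistrib V W (μ[|{ω | T ω = 1}]) r = condDistrib V W (μ[|{ω | T ω = 0}]) r) :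
    CondIndepFun (MeasurableSpace.comap W inferInstance) hW.comap_le V T μ :=
  condIndepFun_of_condDistrib_treated_eq_control_general (mΩ := mΩ) μ W hW V hV T hT hT_bin h_eq
end
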